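/- arXiv:2205.14561 — 4 statements merged into one kernel-verified Lean document; each statement's English description precedes it below -/
import Mathlib

section
/- Let p₁,…,p₄ be points in ℝ³ and suppose the index l is such that ‖∑_{k ≠ l} (pₖ − p_l)/‖pₖ − p_l‖‖ ≤ 1 (with pₖ ≠ p_l for k ≠ l). Then p_l minimizes x ↦ ∑ₖ ‖pₖ − x‖, i.e. p_l is a Fermat–Torricelli point of {p₁,…,p₄}. -/
/-!
The unit vector `u = (p - y)/‖p - y‖` (taken to be `0` when `p = y`) is a subgradient of
`x ↦ ‖p - x‖` at `y`. Summing these subgradient inequalities, the sum `S` of the unit vectors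
from `p l` to the other points gives
`∑_{k ≠ l} ‖p k - p l‖ ≤ ∑_{k ≠ l} ‖p k - x‖ + ‖S‖ ‖p l - x‖`, and `‖S‖ ≤ 1` lets the last
term be absorbed as the missing summand `‖p l - x‖`.
-/

open scoped RealInnerProductSpace

section

variable {F : Type*} [NormedAddCommGroup F] [InnerProductSpace ℝ F]

theorem norm_add_inner_inv_norm_smul_le (v w : F) : ‖v‖ + ⟪‖v‖⁻¹ • v, w⟫ ≤ ‖v + w‖ := by
  rcases eq_or_ne v 0 with rfl | hv
  · simp
  have hunit : ‖‖v‖⁻¹ • v‖ = 1 := norm_smul_inv_norm hv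
  calc ‖v‖ + ⟪‖v‖⁻¹ • v, w⟫ = ⟪‖v‖⁻¹ • v, v + w⟫ := by
        rw [inner_add_right, real_inner_smul_left v v, real_inner_self_eq_norm_sq,
          pow_two, inv_mul_cancel_left₀ (norm_ne_zero_iff.mpr hv)]
    _ ≤ ‖‖v‖⁻¹ • v‖ * ‖v + w‖ := real_inner_le_norm _ _
    _ = ‖v + w‖ := by rw [hunit, one_mul]

theorem sum_norm_sub_le_of_norm_sum_le {ι : Type*} (s : Finset ι) (p : ι → F) (x y : F) {c : ℝ}
    (h : ‖∑ k ∈ s, ‖p k - y‖⁻¹ • (p k - y)‖ ≤ c) :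
    ∑ k ∈ s, ‖p k - y‖ ≤ ∑ k ∈ s, ‖p k - x‖ + c * ‖y - x‖ := by
  set S := ∑ k ∈ s, ‖p k - y‖⁻¹ • (p k - y)
  have hsub : ∑ k ∈ s, ‖p k - y‖ + ⟪S, y - x⟫ ≤ ∑ k ∈ s, ‖p k - x‖ := by
    rw [sum_inner, ← Finset.sum_add_distrib]
    refine Finset.sum_le_sum fun k _ => ?_
    simpa using norm_add_inner_inv_norm_smul_le (p k - y) (y - x)
  have hS : -⟪S, y - x⟫ ≤ c * ‖y - x‖ := calc
    -⟪S, y - x⟫ ≤ ‖S‖ * ‖y - x‖ := (neg_le_abs _).trans (abs_real_inner_le_norm _ _)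
    _ ≤ c * ‖y - x‖ := by gcongr
  linarith

end

theorem fermat_torricelli_vertex_criterion_general
    (p : Fin 4 → EuclideanSpace ℝ (Fin 3)) (l : Fin 4)
    (hcrit : ‖∑ k ∈ Finset.univ.erase l, ‖p k - p l‖⁻¹ • (p k - p l)‖ ≤ 1) :
    ∀ x : EuclideanSpace ℝ (Fin 3),
      ∑ k, ‖p k - p l‖ ≤ ∑ k, ‖p k - x‖ := by
  intro x
  rw [← Finset.sum_erase (f := fun k => ‖p k - p l‖) _ (a := l) (by simp),
    ← Finset.add_sum_erase _ _ (Finset.mem_univ l)]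
  linarith [sum_norm_sub_le_of_norm_sum_le _ p x (p l) hcrit]

/-- Boltyanski criterion: if the sum of the unit vectors from `p l` to the
other three points has norm at most 1, then `p l` is a Fermat–Torricelli
point of the four points. -/
theorem fermat_torricelli_vertex_criterion
    (p : Fin 4 → EuclideanSpace ℝ (Fin 3)) (l : Fin 4)
    (hne : ∀ k, k ≠ l → p k ≠ p l)
    (hcrit : ‖∑ k ∈ Finset.univ.erase l, ‖p k - p l‖⁻¹ • (p k - p l)‖ ≤ 1) :
    ∀ x : EuclideanSpace ℝ (Fin 3),
      ∑ k, ‖p k - p l‖ ≤ ∑ k, ‖p k - x‖ :=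
  fermat_torricelli_vertex_criterion_general p l hcrit
end

section
/- Let u₁, u₂, u₃ be three distinct unit vectors in ℝ² (equivalently, coplanar unit vectors in ℝ³ with common starting point) such that the three angles between consecutive vectors sum to 2π (i.e. the vectors are not all contained in an open half-plane). Then ‖u₁ + u₂ + u₃‖ ≤ 1. -/
open scoped RealInnerProductSpace
open Set Finset

/-!
Since no open half-plane contains all the `u i`, Hahn–Banach puts `0` in their convex hull:
`∑ wᵢ uᵢ = 0` with weights `wᵢ ≥ 0` summing to `1`. Let `c` be the largest weight. Balancing
the term `c • uⱼ` against the others gives `c ≤ 1 - c`, and writing `c • ∑ uᵢ = ∑ (c - wᵢ) • uᵢ`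
with nonnegative coefficients gives `c ‖∑ uᵢ‖ ≤ 3c - 1 ≤ c`.
-/

theorem exists_forall_inner_pos_of_zero_notMem {E : Type*} [NormedAddCommGroup E]
    [InnerProductSpace ℝ E] [CompleteSpace E] {s : Set E} (hs : Convex ℝ s) (hsc : IsClosed s)
    (h : (0 : E) ∉ s) : ∃ v : E, ∀ x ∈ s, 0 < ⟪v, x⟫ := by
  obtain ⟨f, c, hf0, hfs⟩ := geometric_hahn_banach_point_closed hs hsc h
  refine ⟨(InnerProductSpace.toDual ℝ E).symm f, fun x hx => ?_⟩
  rw [InnerProductSpace.toDual_symm_apply]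
  linarith [hfs x hx, map_zero f]

theorem zero_mem_convexHull_of_forall_exists_inner_nonpos {ι E : Type*} [Finite ι] [Nonempty ι]
    [NormedAddCommGroup E] [InnerProductSpace ℝ E] [CompleteSpace E] {u : ι → E}
    (h : ∀ v : E, v ≠ 0 → ∃ i, ⟪v, u i⟫ ≤ 0) : (0 : E) ∈ convexHull ℝ (range u) := by
  by_contra h0
  obtain ⟨v, hv⟩ := exists_forall_inner_pos_of_zero_notMem (convex_convexHull ℝ _)
    ((finite_range u).isCompact_convexHull (𝕜 := ℝ)).isClosed h0
  have hpos : ∀ i, 0 < ⟪v, u i⟫ := fun i => hv _ (subset_convexHull ℝ _ ⟨i, rfl⟩)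
  have hv0 : v ≠ 0 := by
    rintro rfl
    simpa using hpos (Classical.arbitrary ι)
  obtain ⟨i, hi⟩ := h v hv0
  exact (hpos i).not_ge hi

theorem exists_weights_of_mem_convexHull_range {ι E : Type*} [Fintype ι] [AddCommGroup E]
    [Module ℝ E] {u : ι → E} {x : E} (hx : x ∈ convexHull ℝ (range u)) :
    ∃ w : ι → ℝ, (∀ i, 0 ≤ w i) ∧ ∑ i, w i = 1 ∧ ∑ i, w i • u i = x := by
  classical
  rw [convexHull_range_eq_exists_affineCombination] at hx
  obtain ⟨s, w, hw0, hw1, rfl⟩ := hx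
  refine ⟨fun i => if i ∈ s then w i else 0, fun i => ?_, ?_, ?_⟩
  · dsimp only
    split_ifs with hi
    exacts [hw0 i hi, le_rfl]
  · rw [Finset.sum_ite_mem, Finset.univ_inter, hw1]
  · simp only [ite_smul, zero_smul]
    rw [Finset.sum_ite_mem, Finset.univ_inter,
      Finset.affineCombination_eq_linear_combination s u w hw1]

section UnitVectors

variable {ι E : Type*} [Fintype ι] [SeminormedAddCommGroup E] [NormedSpace ℝ E]
  {u : ι → E} {w : ι → ℝ}

theorem two_mul_le_one_of_sum_smul_eq_zero (hu : ∀ i, ‖u i‖ = 1) (hw0 : ∀ i, 0 ≤ w i)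
    (hw1 : ∑ i, w i = 1) (hwu : ∑ i, w i • u i = 0) (j : ι) : 2 * w j ≤ 1 := by
  classical
  have hbalance : w j • u j = -∑ i ∈ univ.erase j, w i • u i := by
    rw [eq_neg_iff_add_eq_zero, Finset.add_sum_erase _ (fun i => w i • u i) (mem_univ j), hwu]
  have hrest : ∑ i ∈ univ.erase j, w i = 1 - w j := by
    rw [← hw1, ← Finset.add_sum_erase _ _ (mem_univ j), add_sub_cancel_left]
  have : w j ≤ 1 - w j :=
    calc w j = ‖w j • u j‖ := by rw [norm_smul, hu, Real.norm_of_nonneg (hw0 j), mul_one]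
      _ = ‖∑ i ∈ univ.erase j, w i • u i‖ := by rw [hbalance, norm_neg]
      _ ≤ ∑ i ∈ univ.erase j, ‖w i • u i‖ := norm_sum_le _ _
      _ = 1 - w j := by
        rw [← hrest]
        refine Finset.sum_congr rfl fun i _ => ?_
        rw [norm_smul, hu, Real.norm_of_nonneg (hw0 i), mul_one]
  linarith

theorem mul_norm_sum_le_of_forall_le (hu : ∀ i, ‖u i‖ = 1) (hw1 : ∑ i, w i = 1)
    (hwu : ∑ i, w i • u i = 0) {c : ℝ} (hc : ∀ i, w i ≤ c) :
    c * ‖∑ i, u i‖ ≤ Fintype.card ι * c - 1 := by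
  have hrepr : c • ∑ i, u i = ∑ i, (c - w i) • u i := by
    simp only [sub_smul, Finset.sum_sub_distrib, hwu, sub_zero, Finset.smul_sum]
  calc c * ‖∑ i, u i‖ ≤ ‖c • ∑ i, u i‖ := by
        rw [norm_smul, Real.norm_eq_abs]
        exact mul_le_mul_of_nonneg_right (le_abs_self c) (norm_nonneg _)
    _ = ‖∑ i, (c - w i) • u i‖ := by rw [hrepr]
    _ ≤ ∑ i, ‖(c - w i) • u i‖ := norm_sum_le _ _
    _ = ∑ i, (c - w i) := by
        refine Finset.sum_congr rfl fun i _ => ?_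
        rw [norm_smul, hu, Real.norm_of_nonneg (sub_nonneg.mpr (hc i)), mul_one]
    _ = Fintype.card ι * c - 1 := by
        rw [Finset.sum_sub_distrib, hw1, Finset.sum_const, Finset.card_univ, nsmul_eq_mul]

theorem norm_sum_le_card_sub_two_of_zero_mem_convexHull (hu : ∀ i, ‖u i‖ = 1)
    (h0 : (0 : E) ∈ convexHull ℝ (range u)) : ‖∑ i, u i‖ ≤ Fintype.card ι - 2 := by
  obtain ⟨w, hw0, hw1, hwu⟩ := exists_weights_of_mem_convexHull_range h0
  have : Nonempty ι := by
    by_contra hι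
    simp [not_nonempty_iff.mp hι] at hw1
  obtain ⟨j, hj⟩ := Finite.exists_max w
  have hpos : 0 < w j := by
    by_contra! hle
    have := Finset.sum_le_sum fun i (_ : i ∈ Finset.univ) => (hj i).trans hle
    simp only [hw1, Finset.sum_const_zero] at this
    linarith
  have hhalf := two_mul_le_one_of_sum_smul_eq_zero hu hw0 hw1 hwu j
  have hbound := mul_norm_sum_le_of_forall_le hu hw1 hwu hj
  refine le_of_mul_le_mul_left ?_ hpos
  linarith

end UnitVectors

theorem norm_sum_three_unit_vectors_le_one_general
    (u : Fin 3 → EuclideanSpace ℝ (Fin 2))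
    (hunit : ∀ i, ‖u i‖ = 1)
    (hhalf : ∀ v : EuclideanSpace ℝ (Fin 2), v ≠ 0 → ∃ i, ⟪v, u i⟫ ≤ 0) :
    ‖u 0 + u 1 + u 2‖ ≤ 1 := by
  have h := norm_sum_le_card_sub_two_of_zero_mem_convexHull hunit
    (zero_mem_convexHull_of_forall_exists_inner_nonpos hhalf)
  rw [Fin.sum_univ_three, Fintype.card_fin] at h
  norm_num at h
  exact h

/-- Three distinct unit vectors in the plane which are not all contained in an
open half-plane (equivalently, the angles between consecutive vectors sum to
`2π`) have a sum of norm at most 1. -/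
theorem norm_sum_three_unit_vectors_le_one
    (u : Fin 3 → EuclideanSpace ℝ (Fin 2))
    (hunit : ∀ i, ‖u i‖ = 1)
    (hdist : ∀ i j, i ≠ j → u i ≠ u j)
    (hhalf : ∀ v : EuclideanSpace ℝ (Fin 2), v ≠ 0 → ∃ i, ⟪v, u i⟫ ≤ 0) :
    ‖u 0 + u 1 + u 2‖ ≤ 1 :=
  norm_sum_three_unit_vectors_le_one_general u hunit hhalf
end

section
/- Let m₁, m₂, m₃ ∈ ℝ³ with m₃ orthogonal to both m₁ and m₂, m₃ ≠ 0, and m₁ ± m₂ ≠ 0. Define p₁ = m₁+m₂+m₃, p₂ = m₁−m₂−m₃, p₃ = m₂−m₁−m₃, p₄ = m₃−m₁−m₂, and p_F = ((‖m₁−m₂‖ − ‖m₁+m₂‖)/(‖m₁−m₂‖ + ‖m₁+m₂‖)) · m₃. Then ∑_{k=1}^{4} (pₖ − p_F)/‖pₖ − p_F‖ = 0, so p_F is the Fermat–Torricelli point of {p₁, p₂, p₃, p₄}. -/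
open scoped RealInnerProductSpace

/-- Formula (7) of the paper: when `m₃` is perpendicular to `m₁` and `m₂`, the
point `p_F = ((‖m₁-m₂‖-‖m₁+m₂‖)/(‖m₁-m₂‖+‖m₁+m₂‖)) • m₃` satisfies the
first-order Fermat–Torricelli condition for the four vertices. -/
theorem candidate_FT_point_grad_zero
    (m₁ m₂ m₃ : EuclideanSpace ℝ (Fin 3))
    (h₁ : ⟪m₃, m₁⟫ = 0) (h₂ : ⟪m₃, m₂⟫ = 0)
    (h₃ : m₃ ≠ 0) (h₄ : m₁ + m₂ ≠ 0) (h₅ : m₁ - m₂ ≠ 0) :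
    let pF := ((‖m₁ - m₂‖ - ‖m₁ + m₂‖) / (‖m₁ - m₂‖ + ‖m₁ + m₂‖)) • m₃
    let p : Fin 4 → EuclideanSpace ℝ (Fin 3) :=
      ![m₁ + m₂ + m₃, m₁ - m₂ - m₃, m₂ - m₁ - m₃, m₃ - m₁ - m₂]
    ∑ k, ‖p k - pF‖⁻¹ • (p k - pF) = 0 := by
  intro pF p
  set a := ‖m₁ - m₂‖ with ha
  set b := ‖m₁ + m₂‖ with hb
  have ha0 : 0 < a := norm_pos_iff.mpr h₅
  have hb0 : 0 < b := norm_pos_iff.mpr h₄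
  have hm0 : 0 < ‖m₃‖ := norm_pos_iff.mpr h₃
  have hab : a + b ≠ 0 := by positivity
  set t := (a - b) / (a + b) with ht
  have o1 : ⟪m₃, m₁ + m₂⟫ = 0 := by rw [inner_add_right, h₁, h₂]; ring
  have o2 : ⟪m₃, m₁ - m₂⟫ = 0 := by rw [inner_sub_right, h₁, h₂]; ring
  have o1' : ⟪m₃, -(m₁ + m₂)⟫ = 0 := by rw [inner_neg_right, o1]; ring
  have o2' : ⟪m₃, -(m₁ - m₂)⟫ = 0 := by rw [inner_neg_right, o2]; ring
  have key : ∀ (u : EuclideanSpace ℝ (Fin 3)) (s : ℝ), ⟪m₃, u⟫ = 0 →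
      ‖u + s • m₃‖ = Real.sqrt (‖u‖ ^ 2 + s ^ 2 * ‖m₃‖ ^ 2) := by
    intro u s hu
    rw [← Real.sqrt_sq (norm_nonneg (u + s • m₃))]
    congr 1
    rw [norm_add_sq_real, real_inner_smul_right, real_inner_comm, hu, norm_smul]
    simp [mul_pow, sq_abs]
  set D := Real.sqrt ((a + b) ^ 2 + 4 * ‖m₃‖ ^ 2) with hD
  have hD0 : 0 < D := Real.sqrt_pos.mpr (by positivity)
  have h1t : 1 - t = 2 * b / (a + b) := by rw [ht]; field_simp; ring
  have h2t : 1 + t = 2 * a / (a + b) := by rw [ht]; field_simp; ring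
  have e0 : p 0 - pF = (m₁ + m₂) + (1 - t) • m₃ := by
    show (m₁ + m₂ + m₃) - t • m₃ = _
    module
  have e1 : p 1 - pF = (m₁ - m₂) + (-(1 + t)) • m₃ := by
    show (m₁ - m₂ - m₃) - t • m₃ = _
    module
  have e2 : p 2 - pF = (-(m₁ - m₂)) + (-(1 + t)) • m₃ := by
    show (m₂ - m₁ - m₃) - t • m₃ = _
    module
  have e3 : p 3 - pF = (-(m₁ + m₂)) + (1 - t) • m₃ := by
    show (m₃ - m₁ - m₂) - t • m₃ = _
    module
  have nb : b ^ 2 + (1 - t) ^ 2 * ‖m₃‖ ^ 2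
      = (b / (a + b)) ^ 2 * ((a + b) ^ 2 + 4 * ‖m₃‖ ^ 2) := by
    rw [h1t]; field_simp; ring
  have na : a ^ 2 + (-(1 + t)) ^ 2 * ‖m₃‖ ^ 2
      = (a / (a + b)) ^ 2 * ((a + b) ^ 2 + 4 * ‖m₃‖ ^ 2) := by
    rw [neg_pow, h2t]; field_simp; ring
  have n0 : ‖p 0 - pF‖ = b / (a + b) * D := by
    rw [e0, key _ _ o1, ← hb, nb, Real.sqrt_mul (sq_nonneg _),
      Real.sqrt_sq (by positivity), hD]
  have n1 : ‖p 1 - pF‖ = a / (a + b) * D := by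
    rw [e1, key _ _ o2, ← ha, na, Real.sqrt_mul (sq_nonneg _),
      Real.sqrt_sq (by positivity), hD]
  have n2 : ‖p 2 - pF‖ = a / (a + b) * D := by
    rw [e2, key _ _ o2', norm_neg, ← ha, na, Real.sqrt_mul (sq_nonneg _),
      Real.sqrt_sq (by positivity), hD]
  have n3 : ‖p 3 - pF‖ = b / (a + b) * D := by
    rw [e3, key _ _ o1', norm_neg, ← hb, nb, Real.sqrt_mul (sq_nonneg _),
      Real.sqrt_sq (by positivity), hD]
  rw [Fin.sum_univ_four, n0, n1, n2, n3, e0, e1, e2, e3]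
  have hDne : D ≠ 0 := ne_of_gt hD0
  have hane : a ≠ 0 := ne_of_gt ha0
  have hbne : b ≠ 0 := ne_of_gt hb0
  rw [h1t, h2t]
  match_scalars <;> field_simp <;> ring
end

section
/- Let p₁, p₂, p₃ ∈ ℝ³ be distinct points and p₄ a point in the interior of the convex hull of {p₁, p₂, p₃} (in the plane they span), p₄ ∉ {p₁,p₂,p₃}. Then for all x ∈ ℝ³, ∑_{k=1}^{4} ‖pₖ − x‖ ≥ ∑_{k=1}^{3} ‖pₖ − p₄‖, i.e. p₄ is a Fermat–Torricelli point of the four points {p₁, p₂, p₃, p₄}. -/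
/-!
Let `uₖ` be the unit vector from `p₄` towards `pₖ`. Since `‖pₖ - x‖ ≥ ⟪uₖ, pₖ - x⟫`, summing gives
`∑ ‖pₖ - x‖ ≥ ∑ ‖pₖ - p₄‖ + ⟪u₁ + u₂ + u₃, p₄ - x⟫`, so `p₄` is a Fermat–Torricelli point as soon
as `‖u₁ + u₂ + u₃‖ ≤ 1`. By the barycentric relation, positive multiples of the `pₖ - p₄` sum
to zero, i.e. they are the sides of a triangle, and for the unit vectors along the sides of a
triangle with side lengths `r₁, r₂, r₃` one computes
`‖u₁ + u₂ + u₃‖² = 1 - (r₁ + r₂ - r₃)(r₁ - r₂ + r₃)(-r₁ + r₂ + r₃) / (r₁ r₂ r₃) ≤ 1`.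
-/

open scoped RealInnerProductSpace

lemma norm_le_add_of_add_add_eq_zero {G : Type*} [SeminormedAddCommGroup G] {w₁ w₂ w₃ : G}
    (h : w₁ + w₂ + w₃ = 0) : ‖w₃‖ ≤ ‖w₁‖ + ‖w₂‖ := by
  simpa [eq_neg_of_add_eq_zero_left h] using norm_add_le w₁ w₂

lemma two_mul_real_inner_of_add_add_eq_zero {E : Type*} [NormedAddCommGroup E]
    [InnerProductSpace ℝ E] {w₁ w₂ w₃ : E} (h : w₁ + w₂ + w₃ = 0) :
    2 * ⟪w₁, w₂⟫ = ‖w₃‖ ^ 2 - ‖w₁‖ ^ 2 - ‖w₂‖ ^ 2 := by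
  have := norm_add_sq_real w₁ w₂
  rw [eq_neg_of_add_eq_zero_left h, norm_neg] at this
  linarith

namespace NormedSpace

lemma norm_normalize_le_one {V : Type*} [NormedAddCommGroup V] [NormedSpace ℝ V] (x : V) :
    ‖normalize x‖ ≤ 1 := by
  rcases eq_or_ne x 0 with rfl | hx
  · simp
  · exact (norm_normalize hx).le

variable {E : Type*} [NormedAddCommGroup E] [InnerProductSpace ℝ E]

lemma real_inner_normalize_self (w : E) : ⟪normalize w, w⟫ = ‖w‖ := by
  rw [normalize, real_inner_smul_left, real_inner_self_eq_norm_sq]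
  rcases eq_or_ne ‖w‖ 0 with hw | hw
  · simp [hw]
  · field_simp

lemma norm_add_real_inner_normalize_le (w v : E) : ‖w‖ + ⟪normalize w, v⟫ ≤ ‖w + v‖ :=
  calc ‖w‖ + ⟪normalize w, v⟫ = ⟪normalize w, w + v⟫ := by
        rw [inner_add_right, real_inner_normalize_self]
    _ ≤ ‖normalize w‖ * ‖w + v‖ := real_inner_le_norm _ _
    _ ≤ ‖w + v‖ := mul_le_of_le_one_left (norm_nonneg _) (norm_normalize_le_one w)

theorem sum_norm_sub_le_of_norm_sum_normalize_le_one {ι : Type*} (s : Finset ι) (p : ι → E)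
    {y : E} (h : ‖∑ i ∈ s, normalize (p i - y)‖ ≤ 1) (x : E) :
    ∑ i ∈ s, ‖p i - y‖ ≤ ∑ i ∈ s, ‖p i - x‖ + ‖y - x‖ := by
  set u := ∑ i ∈ s, normalize (p i - y)
  have hinner : -‖y - x‖ ≤ ⟪u, y - x⟫ :=
    calc -‖y - x‖ ≤ -(‖u‖ * ‖y - x‖) := neg_le_neg (mul_le_of_le_one_left (norm_nonneg _) h)
      _ ≤ ⟪u, y - x⟫ := neg_le_of_abs_le (abs_real_inner_le_norm u (y - x))
  have hsum : ∑ i ∈ s, ‖p i - y‖ + ⟪u, y - x⟫ ≤ ∑ i ∈ s, ‖p i - x‖ := by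
    rw [sum_inner, ← Finset.sum_add_distrib]
    refine Finset.sum_le_sum fun i _ => ?_
    simpa using norm_add_real_inner_normalize_le (p i - y) (y - x)
  linarith

lemma norm_normalize_add_normalize_add_normalize_sq {w₁ w₂ w₃ : E} (h : w₁ + w₂ + w₃ = 0)
    (h₁ : w₁ ≠ 0) (h₂ : w₂ ≠ 0) (h₃ : w₃ ≠ 0) :
    ‖normalize w₁ + normalize w₂ + normalize w₃‖ ^ 2 =
      1 - (‖w₁‖ + ‖w₂‖ - ‖w₃‖) * (‖w₁‖ - ‖w₂‖ + ‖w₃‖) * (-‖w₁‖ + ‖w₂‖ + ‖w₃‖) /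
        (‖w₁‖ * ‖w₂‖ * ‖w₃‖) := by
  have i₁₂ := two_mul_real_inner_of_add_add_eq_zero h
  have i₁₃ := two_mul_real_inner_of_add_add_eq_zero (show w₁ + w₃ + w₂ = 0 by rwa [add_right_comm])
  have i₂₃ := two_mul_real_inner_of_add_add_eq_zero (show w₂ + w₃ + w₁ = 0 by rwa [← add_rotate])
  have r₁ := norm_pos_iff.mpr h₁
  have r₂ := norm_pos_iff.mpr h₂
  have r₃ := norm_pos_iff.mpr h₃
  rw [← real_inner_self_eq_norm_sq]
  simp only [inner_add_left, inner_add_right, real_inner_self_eq_norm_sq, norm_normalize h₁,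
    norm_normalize h₂, norm_normalize h₃]
  simp only [normalize, real_inner_smul_left, real_inner_smul_right,
    real_inner_comm w₁ w₂, real_inner_comm w₁ w₃, real_inner_comm w₂ w₃]
  field_simp
  linear_combination ‖w₃‖ * i₁₂ + ‖w₂‖ * i₁₃ + ‖w₁‖ * i₂₃

theorem norm_normalize_add_normalize_add_normalize_le_one {w₁ w₂ w₃ : E}
    (h : w₁ + w₂ + w₃ = 0) : ‖normalize w₁ + normalize w₂ + normalize w₃‖ ≤ 1 := by
  rcases eq_or_ne w₁ 0 with rfl | h₁
  · rw [zero_add] at h; simp [eq_neg_of_add_eq_zero_right h]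
  rcases eq_or_ne w₂ 0 with rfl | h₂
  · rw [add_zero] at h; simp [eq_neg_of_add_eq_zero_right h]
  rcases eq_or_ne w₃ 0 with rfl | h₃
  · rw [add_zero] at h; simp [eq_neg_of_add_eq_zero_right h]
  have t₃ := norm_le_add_of_add_add_eq_zero h
  have t₂ := norm_le_add_of_add_add_eq_zero (show w₁ + w₃ + w₂ = 0 by rwa [add_right_comm])
  have t₁ := norm_le_add_of_add_add_eq_zero (show w₂ + w₃ + w₁ = 0 by rwa [← add_rotate])
  have hdefect : 0 ≤ (‖w₁‖ + ‖w₂‖ - ‖w₃‖) * (‖w₁‖ - ‖w₂‖ + ‖w₃‖) * (-‖w₁‖ + ‖w₂‖ + ‖w₃‖) /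
      (‖w₁‖ * ‖w₂‖ * ‖w₃‖) := by
    refine div_nonneg (mul_nonneg (mul_nonneg ?_ ?_) ?_) (by positivity) <;> linarith
  have hsq := norm_normalize_add_normalize_add_normalize_sq h h₁ h₂ h₃
  exact (sq_le_one_iff₀ (norm_nonneg _)).mp (by linarith)

end NormedSpace

theorem fermat_torricelli_interior_point_general
    (p₁ p₂ p₃ p₄ : EuclideanSpace ℝ (Fin 3))
    (hint : ∃ a b c : ℝ, 0 < a ∧ 0 < b ∧ 0 < c ∧ a + b + c = 1 ∧
      p₄ = a • p₁ + b • p₂ + c • p₃) :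
    ∀ x : EuclideanSpace ℝ (Fin 3),
      ‖p₁ - p₄‖ + ‖p₂ - p₄‖ + ‖p₃ - p₄‖ ≤
        ‖p₁ - x‖ + ‖p₂ - x‖ + ‖p₃ - x‖ + ‖p₄ - x‖ := by
  obtain ⟨a, b, c, ha, hb, hc, habc, hp₄⟩ := hint
  have hzero : a • (p₁ - p₄) + b • (p₂ - p₄) + c • (p₃ - p₄) = 0 :=
    calc _ = (a • p₁ + b • p₂ + c • p₃) - (a + b + c) • p₄ := by module
      _ = 0 := by rw [habc, one_smul, ← hp₄, sub_self]
  have hunit : ‖∑ i, NormedSpace.normalize (![p₁, p₂, p₃] i - p₄)‖ ≤ 1 := by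
    simpa [Fin.sum_univ_three, NormedSpace.normalize_smul_of_pos, ha, hb, hc] using
      NormedSpace.norm_normalize_add_normalize_add_normalize_le_one hzero
  intro x
  simpa [Fin.sum_univ_three, add_assoc] using
    NormedSpace.sum_norm_sub_le_of_norm_sum_normalize_le_one Finset.univ ![p₁, p₂, p₃] hunit x

/-- If `p₄` lies in the interior of the triangle `p₁p₂p₃` (strictly positive
barycentric coordinates) and differs from the vertices, then `p₄` is a
Fermat–Torricelli point of the four points. -/
theorem fermat_torricelli_interior_point
    (p₁ p₂ p₃ p₄ : EuclideanSpace ℝ (Fin 3))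
    (hd₁₂ : p₁ ≠ p₂) (hd₁₃ : p₁ ≠ p₃) (hd₂₃ : p₂ ≠ p₃)
    (hint : ∃ a b c : ℝ, 0 < a ∧ 0 < b ∧ 0 < c ∧ a + b + c = 1 ∧
      p₄ = a • p₁ + b • p₂ + c • p₃)
    (hne : p₄ ≠ p₁ ∧ p₄ ≠ p₂ ∧ p₄ ≠ p₃) :
    ∀ x : EuclideanSpace ℝ (Fin 3),
      ‖p₁ - p₄‖ + ‖p₂ - p₄‖ + ‖p₃ - p₄‖ ≤
        ‖p₁ - x‖ + ‖p₂ - x‖ + ‖p₃ - x‖ + ‖p₄ - x‖ :=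
  fermat_torricelli_interior_point_general p₁ p₂ p₃ p₄ hint
end
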